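/- In Cl(7,0), the primary 3-form Φ₁ = e₁₂₃ + e₁₄₅ + e₁₆₇ + e₂₄₆ + e₂₅₇ + e₃₄₇ + e₃₅₆ satisfies 2·e₁₂₃₄₅₆₇·(ρ² + 1) = −e₂₄₆ + Φ₁, where ρ = (1/4)(3·e₁₂₃₄₅₆₇ − Φ₁); i.e. the remainder of Φ₁ in the classification equation is −e₂₄₆. -/
import Mathlib
open CliffordAlgebra

noncomputable def Q7 : QuadraticForm ℝ (Fin 7 → ℝ) :=
  QuadraticMap.weightedSumSquares ℝ (fun _ : Fin 7 => (1 : ℝ))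

/-- `e i` is the `i`-th orthonormal generator of Cl(7,0) (so `e 0` is e₁, …, `e 6` is e₇). -/
noncomputable def e (i : Fin 7) : CliffordAlgebra Q7 := ι Q7 (Pi.single i 1)
noncomputable def Φ₁ : CliffordAlgebra Q7 :=
  e 0 * e 1 * e 2 + e 0 * e 3 * e 4 + e 0 * e 5 * e 6 + e 1 * e 3 * e 5 +
    e 1 * e 4 * e 6 + e 2 * e 3 * e 6 + e 2 * e 4 * e 5

noncomputable def ρ : CliffordAlgebra Q7 :=
  (1 / 4 : ℝ) • (3 * (e 0 * e 1 * e 2 * e 3 * e 4 * e 5 * e 6) - Φ₁)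

lemma Q7_single (i : Fin 7) : Q7 (Pi.single i 1) = 1 := by
  simp [Q7, QuadraticMap.weightedSumSquares_apply, Pi.single_apply]

lemma e_sq (i : Fin 7) : e i * e i = 1 := by
  rw [e, ι_sq_scalar, Q7_single, map_one]

lemma e_anti {i j : Fin 7} (h : i ≠ j) : e j * e i = -(e i * e j) := by
  have hs := ι_mul_ι_add_swap (Q := Q7) (Pi.single i 1) (Pi.single j 1)
  have hp : QuadraticMap.polar Q7 (Pi.single i 1) (Pi.single j 1) = 0 := by
    simp [QuadraticMap.polar, Q7, QuadraticMap.weightedSumSquares_apply, Pi.single_apply,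
      Pi.add_apply, add_mul, mul_add, Finset.sum_add_distrib, ite_mul, mul_ite, h, h.symm]
  rw [hp, map_zero] at hs
  exact eq_neg_of_add_eq_zero_right hs

lemma e_swap {i j : Fin 7} (h : i < j) : e j * e i = -(e i * e j) := e_anti (ne_of_lt h)

lemma e_swap' {i j : Fin 7} (h : i < j) (x : CliffordAlgebra Q7) :
    e j * (e i * x) = -(e i * (e j * x)) := by
  rw [← mul_assoc, e_swap h, neg_mul, mul_assoc]

lemma e_sq' (i : Fin 7) (x : CliffordAlgebra Q7) : e i * (e i * x) = x := by
  rw [← mul_assoc, e_sq, one_mul]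

lemma two_mul'' (x : CliffordAlgebra Q7) : 2 * x = (2 : ℝ) • x := by
  rw [Algebra.smul_def, map_ofNat]

lemma three_mul'' (x : CliffordAlgebra Q7) : 3 * x = (3 : ℝ) • x := by
  rw [Algebra.smul_def, map_ofNat]

set_option maxHeartbeats 4000000 in
theorem stmt9 :
    2 * (e 0 * e 1 * e 2 * e 3 * e 4 * e 5 * e 6) * (ρ ^ 2 + 1) =
      -(e 1 * e 3 * e 5) + Φ₁ := by
  simp (config := { decide := true }) only [ρ, Φ₁, pow_two, two_mul'', three_mul'',
    smul_mul_assoc, mul_smul_comm, smul_smul, smul_add, smul_sub, smul_neg,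
    mul_add, add_mul, mul_sub, sub_mul, mul_assoc,
    e_swap, e_swap', e_sq, e_sq', mul_one, one_mul, neg_mul, mul_neg, neg_neg]
  module
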